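/- For an ideal I of a commutative ring R, I is countable strongly annihilated in R if and only if I[[x]], the set of formal power series with all coefficients in I, is countable strongly annihilated in the power series ring R[[x]]. -/

import Mathlib

/-- An ideal `I` is countable strongly annihilated if for each countable subset `S ⊆ I`
and each `b ∉ I` there exists `c` with `c * a = 0` for all `a ∈ S` but `c * b ≠ 0`. -/
def CountableStronglyAnnihilated {R : Type*} [CommRing R] (I : Ideal R) : Prop :=
  ∀ S : Set R, S.Countable → S ⊆ I → ∀ b ∉ I, ∃ c : R, (∀ a ∈ S, c * a = 0) ∧ c * b ≠ 0

/-- `I[[x]]`: the ideal of formal power series all of whose coefficients lie in `I`. -/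
def powerSeriesIdeal {R : Type*} [CommRing R] (I : Ideal R) : Ideal (PowerSeries R) where
  carrier := {f | ∀ n, PowerSeries.coeff n f ∈ I}
  zero_mem' := by intro n; simp
  add_mem' := by
    intro f g hf hg n
    rw [map_add]
    exact I.add_mem (hf n) (hg n)
  smul_mem' := by
    intro c f hf n
    rw [smul_eq_mul, PowerSeries.coeff_mul]
    exact Ideal.sum_mem I fun p _ => I.mul_mem_left _ (hf p.2)

/-!
Constants detect both directions. Given countably many series in `I[[x]]` and `b ∉ I[[x]]`, the
countably many coefficients of the series lie in `I`, and an annihilator `c` of them with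
`c * bₙ ≠ 0` for a coefficient `bₙ ∉ I` gives the constant annihilator `C c`. Conversely,
countably many elements of `I` and `b ∉ I` become constant series, and a series annihilating
them but not `C b` has a coefficient that annihilates them but not `b`.
-/

open PowerSeries

section

variable {R : Type*} [CommRing R] {I : Ideal R}

theorem mem_powerSeriesIdeal {f : R⟦X⟧} : f ∈ powerSeriesIdeal I ↔ ∀ n, coeff n f ∈ I :=
  Iff.rfl

theorem C_mem_powerSeriesIdeal {a : R} : C a ∈ powerSeriesIdeal I ↔ a ∈ I := by
  refine ⟨fun h => by simpa using h 0, fun ha n => ?_⟩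
  rw [coeff_C]
  split_ifs
  exacts [ha, I.zero_mem]

theorem PowerSeries.C_mul_eq_zero_iff {c : R} {f : R⟦X⟧} :
    C c * f = 0 ↔ ∀ n, c * coeff n f = 0 := by
  simp only [PowerSeries.ext_iff, coeff_C_mul, map_zero]

theorem PowerSeries.mul_C_eq_zero_iff {f : R⟦X⟧} {a : R} :
    f * C a = 0 ↔ ∀ n, coeff n f * a = 0 := by
  simp only [PowerSeries.ext_iff, coeff_mul_C, map_zero]

theorem CountableStronglyAnnihilated.of_powerSeriesIdeal
    (h : CountableStronglyAnnihilated (powerSeriesIdeal I)) : CountableStronglyAnnihilated I := by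
  intro S hS hSI b hb
  obtain ⟨c, hc, hcb⟩ := h (C '' S) (hS.image _)
    (Set.image_subset_iff.2 fun a ha => C_mem_powerSeriesIdeal.2 (hSI ha)) (C b)
    (mt C_mem_powerSeriesIdeal.1 hb)
  obtain ⟨n, hn⟩ : ∃ n, coeff n c * b ≠ 0 := by simpa [mul_C_eq_zero_iff] using hcb
  exact ⟨coeff n c, fun a ha => mul_C_eq_zero_iff.1 (hc _ ⟨a, ha, rfl⟩) n, hn⟩

theorem CountableStronglyAnnihilated.powerSeriesIdeal (h : CountableStronglyAnnihilated I) :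
    CountableStronglyAnnihilated (powerSeriesIdeal I) := by
  intro S hS hSI b hb
  obtain ⟨n, hn⟩ : ∃ n, coeff n b ∉ I := by simpa [mem_powerSeriesIdeal] using hb
  let coeffs : Set R := ⋃ f ∈ S, Set.range fun k => coeff k f
  have coeffs_countable : coeffs.Countable := hS.biUnion fun _ _ => Set.countable_range _
  have coeffs_subset : coeffs ⊆ I := by
    simp only [coeffs, Set.iUnion_subset_iff, Set.range_subset_iff]
    exact fun f hf k => hSI hf k
  obtain ⟨c, hc, hcb⟩ := h coeffs coeffs_countable coeffs_subset _ hn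
  refine ⟨C c, fun f hf => C_mul_eq_zero_iff.2 fun k => hc _ ?_, fun hCb => ?_⟩
  · exact Set.mem_biUnion hf ⟨k, rfl⟩
  · exact hcb (C_mul_eq_zero_iff.1 hCb n)

end

theorem stmt7 {R : Type*} [CommRing R] (I : Ideal R) :
    CountableStronglyAnnihilated I ↔
      CountableStronglyAnnihilated (powerSeriesIdeal I) :=
  ⟨CountableStronglyAnnihilated.powerSeriesIdeal,
    CountableStronglyAnnihilated.of_powerSeriesIdeal⟩
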